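/- For the one-step randomized Kaczmarz expectation: if r' = r − (⟨a_i, r⟩/‖a_i‖²) a_i with i chosen with probability ‖a_i‖²/‖A‖_F², then for any vector v with Aᵀ A v = σ² v, one has E⟨r', v⟩ = (1 − σ²/‖A‖_F²) ⟨r, v⟩. -/

import Mathlib

/-! Weighting row `i` by `‖aᵢ‖²` cancels the normalisation in the update, so the expectation
equals `⟪r, v⟫ - (∑ᵢ ⟪aᵢ, r⟫ ⟪aᵢ, v⟫) / ‖A‖_F²`, and `∑ᵢ ⟪aᵢ, r⟫ ⟪aᵢ, v⟫ = ⟪r, Aᵀ A v⟫ = σ² ⟪r, v⟫`. -/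

open RealInnerProductSpace Finset Matrix
noncomputable section

/-- Coercion of a plain vector to Euclidean space (for norms and inner products). -/
def toE {n : ℕ} (v : Fin n → ℝ) : EuclideanSpace ℝ (Fin n) := WithLp.toLp 2 v

section Kaczmarz

variable {E : Type*} [NormedAddCommGroup E] [InnerProductSpace ℝ E]

def kaczmarzStep (a r : E) : E := r - (⟪a, r⟫ / ‖a‖ ^ 2) • a

theorem sq_norm_mul_inner_kaczmarzStep (a r v : E) :
    ‖a‖ ^ 2 * ⟪kaczmarzStep a r, v⟫ = ‖a‖ ^ 2 * ⟪r, v⟫ - ⟪a, r⟫ * ⟪a, v⟫ := by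
  rcases eq_or_ne a 0 with rfl | ha
  · simp
  have : ‖a‖ ^ 2 ≠ 0 := by positivity
  rw [kaczmarzStep, inner_sub_left, real_inner_smul_left]
  field_simp

theorem sum_weighted_inner_kaczmarzStep {ι : Type*} [Fintype ι] (a : ι → E) (r v : E)
    (hF : ∑ j, ‖a j‖ ^ 2 ≠ 0) :
    ∑ i, (‖a i‖ ^ 2 / ∑ j, ‖a j‖ ^ 2) * ⟪kaczmarzStep (a i) r, v⟫
      = ⟪r, v⟫ - (∑ i, ⟪a i, r⟫ * ⟪a i, v⟫) / ∑ j, ‖a j‖ ^ 2 := by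
  simp_rw [div_mul_eq_mul_div, sq_norm_mul_inner_kaczmarzStep, ← Finset.sum_div,
    Finset.sum_sub_distrib, ← Finset.sum_mul, sub_div, mul_div_cancel_left₀ _ hF]

end Kaczmarz

theorem sum_inner_row_mul_inner_row {m n : Type*} [Fintype m] [Fintype n]
    (A : Matrix m n ℝ) (r v : n → ℝ) :
    ∑ i, ⟪WithLp.toLp 2 (A i), WithLp.toLp 2 r⟫ * ⟪WithLp.toLp 2 (A i), WithLp.toLp 2 v⟫
      = ⟪WithLp.toLp 2 r, WithLp.toLp 2 ((Aᵀ * A) *ᵥ v)⟫ := by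
  simp only [EuclideanSpace.inner_toLp_toLp, star_trivial]
  rw [← mulVec_mulVec, dotProduct_comm, dotProduct_mulVec, vecMul_transpose]
  simp only [dotProduct_comm r, dotProduct_comm v]
  rfl

/-- One-step version: `E ⟨r', v⟩ = (1 - σ²/‖A‖_F²) ⟨r, v⟩` for an eigenvector `v`
of `Aᵀ A` with eigenvalue `σ²`. -/
theorem kaczmarz_one_step_singular_vector {n : ℕ} (A : Matrix (Fin n) (Fin n) ℝ)
    (hrows : ∀ i, A i ≠ 0) (r v : Fin n → ℝ) (σ : ℝ)
    (hv : (Aᵀ * A).mulVec v = (σ ^ 2) • v) :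
    ∑ i, (‖toE (A i)‖ ^ 2 / (∑ j, ‖toE (A j)‖ ^ 2)) *
        ⟪toE (r - (⟪toE (A i), toE r⟫ / ‖toE (A i)‖ ^ 2) • A i), toE v⟫
      = (1 - σ ^ 2 / (∑ j, ‖toE (A j)‖ ^ 2)) * ⟪toE r, toE v⟫ := by
  rcases isEmpty_or_nonempty (Fin n) with hn | hn
  · simp [Subsingleton.elim (toE r) 0]
  have hF : ∑ j, ‖toE (A j)‖ ^ 2 ≠ 0 := by
    refine (Finset.sum_pos (fun i _ ↦ pow_pos (norm_pos_iff.2 ?_) 2) univ_nonempty).ne'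
    simpa [toE] using hrows i
  have hsum := sum_inner_row_mul_inner_row A r v
  rw [hv, WithLp.toLp_smul, real_inner_smul_right] at hsum
  change ∑ i, _ * ⟪kaczmarzStep (toE (A i)) (toE r), toE v⟫ = _
  rw [sum_weighted_inner_kaczmarzStep _ _ _ hF]
  simp only [toE] at hF ⊢
  rw [hsum]
  field_simp
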